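/- arXiv:1203.2481 — 3 statements merged into one kernel-verified Lean document; each statement's English description precedes it below -/
import Mathlib

section
/- Let 𝒜 be a unital complex Banach algebra such that every Jordan derivation on 𝒜 is a derivation, and let W ∈ 𝒜 be a left separating point (WA = 0 implies A = 0) or a right separating point (AW = 0 implies A = 0) of 𝒜. If {d_i}_{i∈ℕ} is a sequence of linear maps on 𝒜 with d₀ = id_𝒜 that is higher derivable at W, then {d_i}_{i∈ℕ} is a higher derivation. -/
open Finset



lemma sum_Icc_shift {M : Type*} [AddCommMonoid M] (j n : ℕ) (f : ℕ → M) :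
    ∑ i ∈ range (n+2-j), f (j+i) = ∑ p ∈ Icc j (n+1), f p := by
  apply Finset.sum_nbij' (fun i => j + i) (fun p => p - j)
  · intro i hi; simp only [mem_range] at hi; simp only [mem_Icc]; omega
  · intro p hp; simp only [mem_Icc] at hp; simp only [mem_range]; omega
  · intro i hi; simp only [mem_range] at hi; omega
  · intro p hp; simp only [mem_Icc] at hp; omega
  · intro i hi; rfl

lemma sum_range_one_shift {M : Type*} [AddCommMonoid M] (m : ℕ) (f : ℕ → M) :
    ∑ i ∈ range m, f (i+1) = ∑ p ∈ Icc 1 m, f p := by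
  apply Finset.sum_nbij' (fun i => i + 1) (fun p => p - 1)
  · intro i hi; simp only [mem_range] at hi; simp only [mem_Icc]; omega
  · intro p hp; simp only [mem_Icc] at hp; simp only [mem_range]; omega
  · intro i hi; simp only [mem_range] at hi; omega
  · intro p hp; simp only [mem_Icc] at hp; omega
  · intro i hi; rfl

lemma sum_range_split {M : Type*} [AddCommMonoid M] (m : ℕ) (f : ℕ → M) :
    ∑ i ∈ range (m+2), f i = f 0 + (∑ p ∈ Icc 1 m, f p) + f (m+1) := by
  rw [Finset.sum_range_succ, Finset.sum_range_succ', sum_range_one_shift]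
  abel

lemma triangle_swap {M : Type*} [AddCommMonoid M] (n : ℕ) (F : ℕ → ℕ → M) :
    ∑ j ∈ Icc 1 n, ∑ p ∈ Icc j (n+1), F j p
      = ∑ p ∈ Icc 1 (n+1), ∑ j ∈ Icc 1 (min p n), F j p := by
  have h1 : ∀ j ∈ Icc 1 n, ∑ p ∈ Icc j (n+1), F j p
      = ∑ p ∈ Icc 1 (n+1), if j ≤ p then F j p else 0 := by
    intro j hj; simp only [mem_Icc] at hj
    rw [← Finset.sum_filter]
    apply Finset.sum_congr _ (fun _ _ => rfl)
    ext p; simp only [mem_Icc, mem_filter]; omega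
  have h2 : ∀ p ∈ Icc 1 (n+1), ∑ j ∈ Icc 1 (min p n), F j p
      = ∑ j ∈ Icc 1 n, if j ≤ p then F j p else 0 := by
    intro p hp; simp only [mem_Icc] at hp
    rw [← Finset.sum_filter]
    apply Finset.sum_congr _ (fun _ _ => rfl)
    ext j; simp only [mem_Icc, mem_filter, le_min_iff]; omega
  rw [Finset.sum_congr rfl h1, Finset.sum_congr rfl h2, Finset.sum_comm]

lemma triangle_swap2 {M : Type*} [AddCommMonoid M] (n : ℕ) (F : ℕ → ℕ → M) :
    ∑ j ∈ Icc 1 n, ∑ i ∈ range (n+2-j), F j i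
      = ∑ i ∈ range (n+1), ∑ j ∈ Icc 1 (min (n+1-i) n), F j i := by
  have h1 : ∀ j ∈ Icc 1 n, ∑ i ∈ range (n+2-j), F j i
      = ∑ i ∈ range (n+1), if j + i ≤ n+1 then F j i else 0 := by
    intro j hj; simp only [mem_Icc] at hj
    rw [← Finset.sum_filter]
    apply Finset.sum_congr _ (fun _ _ => rfl)
    ext i; simp only [mem_range, mem_filter]; omega
  have h2 : ∀ i ∈ range (n+1), ∑ j ∈ Icc 1 (min (n+1-i) n), F j i
      = ∑ j ∈ Icc 1 n, if j + i ≤ n+1 then F j i else 0 := by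
    intro i hi; simp only [mem_range] at hi
    rw [← Finset.sum_filter]
    apply Finset.sum_congr _ (fun _ _ => rfl)
    ext j; simp only [mem_Icc, mem_filter, le_min_iff]; omega
  rw [Finset.sum_congr rfl h1, Finset.sum_congr rfl h2, Finset.sum_comm]


noncomputable def deltaAux {A : Type*} [Ring A] [Algebra ℂ A]
    (d : ℕ → (A →ₗ[ℂ] A)) : ℕ → (A →ₗ[ℂ] A)
  | 0 => 0
  | (n+1) => d (n+1) - (((n:ℂ)+1))⁻¹ •
      ∑ j ∈ (Finset.Icc 1 n).attach,
        ((j:ℕ) : ℂ) • ((deltaAux d j).comp (d (n+1 - (j:ℕ))))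
  decreasing_by
    have := j.2
    simp only [Finset.mem_Icc] at this
    omega

lemma deltaAux_succ {A : Type*} [Ring A] [Algebra ℂ A] (d : ℕ → (A →ₗ[ℂ] A)) (n : ℕ) :
    deltaAux d (n+1) = d (n+1) - (((n:ℂ)+1))⁻¹ •
      ∑ j ∈ Finset.Icc 1 n, ((j:ℕ) : ℂ) • ((deltaAux d j).comp (d (n+1 - j))) := by
  rw [deltaAux]
  congr 1
  exact congrArg _ (Finset.sum_attach (Finset.Icc 1 n)
    (fun j => ((j : ℕ) : ℂ) • ((deltaAux d j).comp (d (n+1-j)))))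


-- the recursion identity
lemma deltaAux_rec {A : Type*} [Ring A] [Algebra ℂ A] (d : ℕ → (A →ₗ[ℂ] A))
    (hd0 : d 0 = LinearMap.id) (n : ℕ) (x : A) :
    ∑ j ∈ Finset.Icc 1 (n+1), ((j:ℕ) : ℂ) • (deltaAux d j) (d (n+1-j) x)
      = ((n:ℂ)+1) • d (n+1) x := by
  have hne : ((n:ℂ)+1) ≠ 0 := by
    exact_mod_cast Nat.cast_add_one_ne_zero (R := ℂ) n
  rw [Finset.sum_Icc_succ_top (by omega)]
  have h1 : deltaAux d (n+1) (d (n+1-(n+1)) x) = deltaAux d (n+1) x := by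
    rw [Nat.sub_self, hd0]; rfl
  rw [h1, deltaAux_succ]
  simp only [LinearMap.sub_apply, LinearMap.smul_apply, LinearMap.sum_apply, LinearMap.coe_comp,
    Function.comp_apply, smul_sub, smul_smul]
  push_cast
  rw [mul_inv_cancel₀ hne, one_smul]
  abel


lemma Elaw_aux {A : Type*} [Ring A] [Algebra ℂ A] (d : ℕ → (A →ₗ[ℂ] A))
    (hd0 : d 0 = LinearMap.id) (m : ℕ)
    (ihlaw : ∀ k, k ≤ m → ∀ a b : A, d k (a*b) = ∑ i ∈ range (k+1), d i a * d (k-i) b)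
    (ihder : ∀ j, j ≤ m → ∀ a b : A,
      (deltaAux d j) (a*b) = (deltaAux d j) a * b + a * (deltaAux d j) b)
    (a b : A) :
    ∑ j ∈ Icc 1 m, ((j:ℕ):ℂ) • (deltaAux d j) (d (m+1-j) (a*b))
      = ((m:ℂ)+1) • (∑ p ∈ Icc 1 m, d p a * d (m+1-p) b)
        + (∑ j ∈ Icc 1 m, ((j:ℕ):ℂ) • (deltaAux d j) (d (m+1-j) a)) * b
        + a * (∑ j ∈ Icc 1 m, ((j:ℕ):ℂ) • (deltaAux d j) (d (m+1-j) b)) := by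
  have step1 : ∑ j ∈ Icc 1 m, ((j:ℕ):ℂ) • (deltaAux d j) (d (m+1-j) (a*b))
      = ∑ j ∈ Icc 1 m, ∑ i ∈ range (m+2-j),
          (((j:ℕ):ℂ) • ((deltaAux d j) (d i a) * d (m+1-j-i) b)
            + ((j:ℕ):ℂ) • (d i a * (deltaAux d j) (d (m+1-j-i) b))) := by
    apply Finset.sum_congr rfl
    intro j hj
    simp only [mem_Icc] at hj
    rw [ihlaw (m+1-j) (by omega) a b, show m+1-j+1 = m+2-j by omega, map_sum, Finset.smul_sum]
    apply Finset.sum_congr rfl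
    intro i hi
    rw [ihder j (by omega), smul_add]
  rw [step1]
  simp only [Finset.sum_add_distrib]
  -- now 2 double sums
  have hS1 : ∑ j ∈ Icc 1 m, ∑ i ∈ range (m+2-j),
        ((j:ℕ):ℂ) • ((deltaAux d j) (d i a) * d (m+1-j-i) b)
      = (∑ p ∈ Icc 1 m, ((p:ℕ):ℂ) • (d p a * d (m+1-p) b))
        + (∑ j ∈ Icc 1 m, ((j:ℕ):ℂ) • (deltaAux d j) (d (m+1-j) a)) * b := by
    have e1 : ∑ j ∈ Icc 1 m, ∑ i ∈ range (m+2-j),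
          ((j:ℕ):ℂ) • ((deltaAux d j) (d i a) * d (m+1-j-i) b)
        = ∑ j ∈ Icc 1 m, ∑ p ∈ Icc j (m+1),
          ((j:ℕ):ℂ) • ((deltaAux d j) (d (p-j) a) * d (m+1-p) b) := by
      apply Finset.sum_congr rfl
      intro j hj
      rw [← sum_Icc_shift j m (fun p => ((j:ℕ):ℂ) • ((deltaAux d j) (d (p-j) a) * d (m+1-p) b))]
      apply Finset.sum_congr rfl
      intro i hi
      have e2 : j + i - j = i := by omega
      have e3 : m + 1 - (j+i) = m+1-j-i := by omega
      rw [e2, e3]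
    rw [e1, triangle_swap m (fun j p => ((j:ℕ):ℂ) • ((deltaAux d j) (d (p-j) a) * d (m+1-p) b)),
      Finset.sum_Icc_succ_top (by omega : 1 ≤ m+1)]
    congr 1
    · apply Finset.sum_congr rfl
      intro p hp
      simp only [mem_Icc] at hp
      rw [min_eq_left (by omega : p ≤ m)]
      obtain ⟨q, rfl⟩ : ∃ q, p = q + 1 := ⟨p-1, by omega⟩
      have e4 : ∑ j ∈ Icc 1 (q+1), ((j:ℕ):ℂ) • ((deltaAux d j) (d (q+1-j) a) * d (m+1-(q+1)) b)
          = (∑ j ∈ Icc 1 (q+1), ((j:ℕ):ℂ) • (deltaAux d j) (d (q+1-j) a)) * d (m+1-(q+1)) b := by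
        rw [Finset.sum_mul]
        exact Finset.sum_congr rfl (fun j hj => (smul_mul_assoc _ _ _).symm)
      rw [e4, deltaAux_rec d hd0 q a, smul_mul_assoc]
      norm_cast
    · rw [min_eq_right (by omega : m ≤ m+1), Finset.sum_mul]
      apply Finset.sum_congr rfl
      intro j hj
      rw [Nat.sub_self, hd0, smul_mul_assoc]
      simp
  have hS2 : ∑ j ∈ Icc 1 m, ∑ i ∈ range (m+2-j),
        ((j:ℕ):ℂ) • (d i a * (deltaAux d j) (d (m+1-j-i) b))
      = (∑ p ∈ Icc 1 m, (((m+1-p:ℕ)):ℂ) • (d p a * d (m+1-p) b))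
        + a * (∑ j ∈ Icc 1 m, ((j:ℕ):ℂ) • (deltaAux d j) (d (m+1-j) b)) := by
    rw [triangle_swap2 m (fun j i => ((j:ℕ):ℂ) • (d i a * (deltaAux d j) (d (m+1-j-i) b))),
      Finset.sum_range_succ']
    congr 1
    · rw [← sum_range_one_shift m (fun p => (((m+1-p:ℕ)):ℂ) • (d p a * d (m+1-p) b))]
      apply Finset.sum_congr rfl
      intro i hi
      simp only [mem_range] at hi
      rw [min_eq_left (by omega : m+1-(i+1) ≤ m)]
      have e5 : m+1-(i+1) = (m-i-1)+1 := by omega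
      rw [e5]
      have e6 : ∑ j ∈ Icc 1 ((m-i-1)+1), ((j:ℕ):ℂ) • (d (i+1) a * (deltaAux d j) (d (m+1-j-(i+1)) b))
          = d (i+1) a * ∑ j ∈ Icc 1 ((m-i-1)+1), ((j:ℕ):ℂ) • (deltaAux d j) (d ((m-i-1)+1-j) b) := by
        rw [Finset.mul_sum]
        apply Finset.sum_congr rfl
        intro j hj
        simp only [mem_Icc] at hj
        rw [show m+1-j-(i+1) = (m-i-1)+1-j by omega, mul_smul_comm]
      rw [e6, deltaAux_rec d hd0 (m-i-1) b, mul_smul_comm]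
      have e7 : (((m-i-1:ℕ)):ℂ) + 1 = ((m+1-(i+1):ℕ):ℂ) := by
        rw [show m+1-(i+1) = (m-i-1)+1 by omega]
        push_cast
        ring
      rw [e7, show m - i - 1 + 1 = m+1-(i+1) by omega]
    · rw [min_eq_right (by omega : m ≤ m+1-0), Finset.mul_sum]
      apply Finset.sum_congr rfl
      intro j hj
      rw [hd0, mul_smul_comm]
      simp only [Nat.sub_zero]
      simp
  rw [hS1, hS2, Finset.smul_sum]
  have e8 : ∑ p ∈ Icc 1 m, ((p:ℕ):ℂ) • (d p a * d (m+1-p) b)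
        + ∑ p ∈ Icc 1 m, (((m+1-p:ℕ)):ℂ) • (d p a * d (m+1-p) b)
      = ∑ p ∈ Icc 1 m, ((m:ℂ)+1) • (d p a * d (m+1-p) b) := by
    rw [← Finset.sum_add_distrib]
    apply Finset.sum_congr rfl
    intro p hp
    simp only [mem_Icc] at hp
    rw [← add_smul, ← Nat.cast_add, show p + (m+1-p) = m+1 by omega]
    push_cast
    ring_nf
  calc ∑ p ∈ Icc 1 m, ((p:ℕ):ℂ) • (d p a * d (m+1-p) b)
        + (∑ j ∈ Icc 1 m, ((j:ℕ):ℂ) • (deltaAux d j) (d (m+1-j) a)) * b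
        + (∑ p ∈ Icc 1 m, (((m+1-p:ℕ)):ℂ) • (d p a * d (m+1-p) b)
          + a * (∑ j ∈ Icc 1 m, ((j:ℕ):ℂ) • (deltaAux d j) (d (m+1-j) b)))
      = (∑ p ∈ Icc 1 m, ((p:ℕ):ℂ) • (d p a * d (m+1-p) b)
          + ∑ p ∈ Icc 1 m, (((m+1-p:ℕ)):ℂ) • (d p a * d (m+1-p) b))
        + (∑ j ∈ Icc 1 m, ((j:ℕ):ℂ) • (deltaAux d j) (d (m+1-j) a)) * b
        + a * (∑ j ∈ Icc 1 m, ((j:ℕ):ℂ) • (deltaAux d j) (d (m+1-j) b)) := by abel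
    _ = ∑ p ∈ Icc 1 m, ((m:ℂ)+1) • (d p a * d (m+1-p) b)
        + (∑ j ∈ Icc 1 m, ((j:ℕ):ℂ) • (deltaAux d j) (d (m+1-j) a)) * b
        + a * (∑ j ∈ Icc 1 m, ((j:ℕ):ℂ) • (deltaAux d j) (d (m+1-j) b)) := by rw [e8]


lemma isUnit_sub_smul_one {A : Type*} [NormedRing A] [NormedAlgebra ℂ A] [CompleteSpace A]
    (a : A) {c : ℂ} (h : ‖a‖ < ‖c‖) : IsUnit (a - c • (1:A)) := by
  have hc : c ≠ 0 := by
    intro h0; rw [h0] at h; simp at h; exact absurd h (not_lt.2 (norm_nonneg a))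
  have hcpos : (0:ℝ) < ‖c‖ := lt_of_le_of_lt (norm_nonneg a) h
  have h1 : ‖c⁻¹ • a‖ < 1 := by
    rw [norm_smul, norm_inv, inv_mul_lt_one₀ hcpos]; exact h
  have hu : IsUnit ((1:A) - c⁻¹ • a) := (Units.oneSub _ h1).isUnit
  have heq : a - c • (1:A) = -(c • ((1:A) - c⁻¹ • a)) := by
    rw [smul_sub, smul_smul, mul_inv_cancel₀ hc, one_smul]; abel
  rw [heq]
  refine IsUnit.neg ?_
  rw [Algebra.smul_def]
  exact IsUnit.mul (hc.isUnit.map (algebraMap ℂ A)) hu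

lemma isUnit_add_smul_one {A : Type*} [NormedRing A] [NormedAlgebra ℂ A] [CompleteSpace A]
    (a : A) {c : ℂ} (h : ‖a‖ < ‖c‖) : IsUnit (a + c • (1:A)) := by
  have h' : ‖a‖ < ‖-c‖ := by rwa [norm_neg]
  have := isUnit_sub_smul_one a h'
  rwa [neg_smul, sub_neg_eq_add] at this

lemma unit_norm_facts {A : Type*} [NormedRing A] (a : A) :
    ‖a‖ < ‖((‖a‖ + 1 : ℝ) : ℂ)‖ := by
  rw [Complex.norm_real, Real.norm_eq_abs, abs_of_pos (by positivity)]
  linarith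


section Wrap
variable {A : Type*} [NormedRing A] [NormedAlgebra ℂ A] [CompleteSpace A]

lemma key_unit {A : Type*} [NormedRing A] [NormedAlgebra ℂ A] [CompleteSpace A]
    (g T : A →ₗ[ℂ] A) (hT1 : T 1 = 0)
    (hgT : ∀ u : Aˣ, T ↑u = ↑u * g (↑u⁻¹ : Aˣ) * ↑u)
    (hginv : ∀ u : Aˣ, g (↑u⁻¹ : Aˣ) = ↑u⁻¹ * T ↑u * ↑u⁻¹) :
    ∀ u : Aˣ, T (↑u * ↑u) = T ↑u * ↑u + ↑u * T ↑u := by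
  intro u
  set c : ℂ := ((‖(u:A)‖ + 1 : ℝ) : ℂ) with hc_def
  have hnc : ‖c‖ = ‖(u:A)‖ + 1 := by
    rw [hc_def, Complex.norm_real, Real.norm_eq_abs, abs_of_pos]; positivity
  have hc0 : c ≠ 0 := by
    intro h; rw [h] at hnc; simp at hnc; nlinarith [norm_nonneg (u:A)]
  have hvu : IsUnit ((u:A) + c • 1) := isUnit_add_smul_one _ (by rw [hnc]; linarith)
  set v : Aˣ := hvu.unit with hv_def
  have hv : (v : A) = (u:A) + c • 1 := hvu.unit_spec
  have hcomm : Commute (u:A) (v:A) := by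
    rw [hv]; exact (Commute.refl (u:A)).add_right ((Commute.one_right (u:A)).smul_right c)
  have hw_inv : (((v * u)⁻¹ : Aˣ) : A) = (↑u⁻¹ : A) * ↑v⁻¹ := by rw [mul_inv_rev]; rfl
  have h1 : (↑u⁻¹ : A) - ↑v⁻¹ = c • ((↑u⁻¹ : A) * ↑v⁻¹) := by
    have h2 : (↑u⁻¹ : A) - ↑v⁻¹ = ↑u⁻¹ * ((v:A) - (u:A)) * ↑v⁻¹ := by
      rw [mul_sub, sub_mul]
      simp [mul_assoc, Units.mul_inv_cancel_right, Units.inv_mul_cancel_left]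
    rw [h2, hv]
    simp [smul_mul_assoc, mul_smul_comm]
  -- value of g on (v*u)⁻¹
  have h3 : g (↑((v*u)⁻¹) : A) = c⁻¹ • ((↑u⁻¹ : A) * T ↑u * ↑u⁻¹ - (↑v⁻¹ : A) * T ↑u * ↑v⁻¹) := by
    have hTv : T (v:A) = T (u:A) := by rw [hv, map_add, map_smul, hT1, smul_zero, add_zero]
    have : c • g ((↑u⁻¹ : A) * ↑v⁻¹) = g (↑u⁻¹ : A) - g (↑v⁻¹ : A) := by
      rw [← map_smul, ← h1, map_sub]
    rw [hw_inv, eq_inv_smul_iff₀ hc0, this, hginv u, hginv v, hTv]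
  -- main computation
  have hmul1 : ((v:A) * u) * ((↑u⁻¹:A) * T ↑u * ↑u⁻¹) * ((v:A) * u) = (v:A) * T ↑u * v := by
    have huvu : (↑u⁻¹ : A) * ((v:A) * u) = (v:A) := by
      rw [← mul_assoc, (hcomm.units_inv_left).eq, Units.inv_mul_cancel_right]
    calc ((v:A) * u) * ((↑u⁻¹:A) * T ↑u * ↑u⁻¹) * ((v:A) * u)
        = ((v:A) * (u * ↑u⁻¹)) * T ↑u * (↑u⁻¹ * ((v:A) * u)) := by
          simp only [mul_assoc]
      _ = (v:A) * T ↑u * v := by rw [huvu, Units.mul_inv, mul_one]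
  have hmul2 : ((v:A) * u) * ((↑v⁻¹:A) * T ↑u * ↑v⁻¹) * ((v:A) * u) = (u:A) * T ↑u * u := by
    have hvvu : (↑v⁻¹ : A) * ((v:A) * u) = (u:A) := Units.inv_mul_cancel_left v u
    calc ((v:A) * u) * ((↑v⁻¹:A) * T ↑u * ↑v⁻¹) * ((v:A) * u)
        = ((v:A) * (u * ↑v⁻¹)) * T ↑u * (↑v⁻¹ * ((v:A) * u)) := by
          simp only [mul_assoc]
      _ = (u:A) * T ↑u * u := by
          rw [hvvu, (hcomm.units_inv_right).eq, ← mul_assoc, Units.mul_inv, one_mul]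
  -- compute T (v*u)
  have h4 : T ((v:A) * u) = c⁻¹ • ((v:A) * T ↑u * v - (u:A) * T ↑u * u) := by
    have := hgT (v * u)
    rw [h3] at this
    rw [Units.val_mul] at this
    rw [this]
    rw [mul_smul_comm, smul_mul_assoc, mul_sub, sub_mul, hmul1, hmul2]
  -- expand both sides
  have hvu_expand : (v:A) * u = (u:A) * u + c • (u:A) := by
    rw [hv, add_mul, smul_mul_assoc, one_mul]
  have hlhs : T ((v:A) * u) = T ((u:A) * u) + c • T (u:A) := by
    rw [hvu_expand, map_add, map_smul]
  have hrhs : (v:A) * T ↑u * v - (u:A) * T ↑u * u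
      = c • (T ↑u * u + (u:A) * T ↑u + c • T ↑u) := by
    rw [hv]
    simp only [add_mul, mul_add, smul_mul_assoc, mul_smul_comm, one_mul, mul_one, smul_add,
      smul_smul]
    abel
  rw [hrhs, inv_smul_smul₀ hc0, hlhs] at h4
  have h6 : T ((u:A)*u) + c • T ↑u = (T ↑u * ↑u + ↑u * T ↑u) + c • T ↑u := by
    rw [← h4]
  exact add_right_cancel h6

-- core
lemma core_lemma {A : Type*} [NormedRing A] [NormedAlgebra ℂ A] [CompleteSpace A]
    (hJtoD : ∀ δ : A →ₗ[ℂ] A,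
      (∀ a b : A, δ (a * b + b * a) = δ a * b + a * δ b + δ b * a + b * δ a) →
      (∀ a b : A, δ (a * b) = δ a * b + a * δ b))
    (g T : A →ₗ[ℂ] A) (hT1 : T 1 = 0)
    (hgT : ∀ u : Aˣ, T ↑u = ↑u * g (↑u⁻¹ : Aˣ) * ↑u) :
    ∀ a b : A, g (a * b) = g a * b + a * g b := by
  have hginv : ∀ u : Aˣ, g (↑u⁻¹ : Aˣ) = ↑u⁻¹ * T ↑u * ↑u⁻¹ := by
    intro u
    rw [hgT u]
    simp [mul_assoc, Units.mul_inv_cancel_left, Units.inv_mul_cancel_left]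
  have key := key_unit g T hT1 hgT hginv
  -- square identity for all a
  have Tsq : ∀ a : A, T (a * a) = T a * a + a * T a := by
    intro a
    set c : ℂ := ((‖a‖ + 1 : ℝ) : ℂ) with hc_def
    have hu : IsUnit (a - c • (1:A)) := isUnit_sub_smul_one a (unit_norm_facts a)
    set u : Aˣ := hu.unit with hu_def
    have huv : (u : A) = a - c • 1 := hu.unit_spec
    have h1 := key u
    rw [huv] at h1
    have h_ae : a * (c•(1:A)) = c • a := by rw [mul_smul_comm, mul_one]
    have h_ea : (c•(1:A)) * a = c • a := by rw [smul_mul_assoc, one_mul]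
    have h_ee : (c•(1:A)) * (c•(1:A)) = (c*c) • (1:A) := by
      rw [smul_mul_assoc, one_mul, smul_smul]
    have hexp : (a - c • (1:A)) * (a - c • 1) = a * a - (2*c) • a + (c*c) • (1:A) := by
      rw [sub_mul, mul_sub, mul_sub, h_ae, h_ea, h_ee, two_mul, add_smul]
      abel
    rw [hexp] at h1
    rw [map_add, map_sub, map_smul, map_smul, hT1, smul_zero, add_zero] at h1
    rw [map_sub, map_smul, hT1, smul_zero, sub_zero] at h1
    -- h1 : T (a*a) - (2*c) • T a = T a * (a - c•1) + (a - c•1) * T a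
    have h_Te : T a * (c•(1:A)) = c • T a := by rw [mul_smul_comm, mul_one]
    have h_eT : (c•(1:A)) * T a = c • T a := by rw [smul_mul_assoc, one_mul]
    have h2 : T a * (a - c • (1:A)) + (a - c • 1) * T a
        = T a * a + a * T a - (2*c) • T a := by
      rw [mul_sub, sub_mul, h_Te, h_eT, two_mul, add_smul]
      abel
    rw [h2] at h1
    exact sub_left_inj.mp h1
  -- Jordan
  have TJordan : ∀ a b : A, T (a * b + b * a) = T a * b + a * T b + T b * a + b * T a := by
    intro a b
    have h2 : (a + b) * (a + b) = a * a + (a * b + b * a) + b * b := by noncomm_ring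
    have e1 : T (a*b + b*a) = T ((a+b)*(a+b)) - T (a*a) - T (b*b) := by
      rw [h2]; simp only [map_add]; abel
    rw [e1, Tsq (a+b), Tsq a, Tsq b, map_add]
    simp only [add_mul, mul_add]
    abel
  have Tder := hJtoD T TJordan
  -- g = -T
  have hgu : ∀ u : Aˣ, g (u : A) = - T (u : A) := by
    intro u
    have h1 := hginv u⁻¹
    rw [inv_inv] at h1
    have hTinv : T (↑u⁻¹ : A) = -(↑u⁻¹ * T ↑u * ↑u⁻¹) := by
      have h2 := Tder (↑u⁻¹ : A) (↑u : A)
      rw [Units.inv_mul, hT1] at h2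
      have h4 : T (↑u⁻¹:A) * ↑u = -((↑u⁻¹:A) * T ↑u) := eq_neg_of_add_eq_zero_left h2.symm
      calc T (↑u⁻¹:A) = T (↑u⁻¹:A) * ↑u * ↑u⁻¹ := (Units.mul_inv_cancel_right _ u).symm
        _ = -((↑u⁻¹:A) * T ↑u) * ↑u⁻¹ := by rw [h4]
        _ = -(↑u⁻¹ * T ↑u * ↑u⁻¹) := by rw [neg_mul]
    rw [h1, hTinv, mul_neg, neg_mul]
    simp [mul_assoc, Units.mul_inv_cancel_left]
  have hg1 : g (1:A) = 0 := by
    have h5 := hgu 1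
    rw [Units.val_one, hT1] at h5
    simpa using h5
  have hgall : ∀ x : A, g x = - T x := by
    intro x
    set c : ℂ := ((‖x‖+1:ℝ):ℂ) with hc_def
    have hu : IsUnit (x - c • (1:A)) := isUnit_sub_smul_one x (unit_norm_facts x)
    have h1 : g (x - c • (1:A)) = -T (x - c • (1:A)) := by
      rw [← hu.unit_spec]; exact hgu hu.unit
    have h6 : g x = g (x - c • (1:A)) + c • g 1 := by
      rw [map_sub, map_smul]; abel
    rw [h6, hg1, smul_zero, add_zero, h1, map_sub, map_smul, hT1, smul_zero, sub_zero]
  intro a b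
  rw [hgall (a*b), Tder a b, hgall a, hgall b, neg_add, neg_mul, mul_neg]

lemma single_point_left
    (hJtoD : ∀ δ : A →ₗ[ℂ] A,
      (∀ a b : A, δ (a * b + b * a) = δ a * b + a * δ b + δ b * a + b * δ a) →
      (∀ a b : A, δ (a * b) = δ a * b + a * δ b))
    (W : A) (hWl : ∀ a : A, W * a = 0 → a = 0)
    (g : A →ₗ[ℂ] A) (hg : ∀ a b : A, a * b = W → g (a * b) = g a * b + a * g b) :
    ∀ a b : A, g (a * b) = g a * b + a * g b := by
  have hgW : ∀ a b : A, a * b = W → g W = g a * b + a * g b := by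
    intro a b h
    have := hg a b h
    rwa [h] at this
  -- main factorisation identity
  have hF : ∀ u : Aˣ, W * (↑u * g (↑u⁻¹ : Aˣ) * ↑u) = g W * ↑u - g (W * ↑u) := by
    intro u
    have h0 : (W * ↑u) * (↑u⁻¹ : A) = W := by
      rw [mul_assoc, Units.mul_inv, mul_one]
    have h1 := hgW (W * ↑u) (↑u⁻¹ : A) h0
    have h2 := congrArg (fun z => z * (↑u : A)) h1
    simp only [add_mul, mul_assoc, Units.inv_mul, mul_one] at h2
    -- h2 : g W * ↑u = g (W * ↑u) + W * (↑u * (g ↑u⁻¹ * ↑u))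
    rw [eq_sub_iff_add_eq, h2]
    simp only [mul_assoc]
    abel
  -- the auxiliary map T
  set Tf : A → A := fun x =>
    (fun hu : IsUnit (x - ((‖x‖+1:ℝ):ℂ) • (1:A)) => ↑hu.unit * g ((↑hu.unit⁻¹ : Aˣ) : A) * ↑hu.unit)
      (isUnit_sub_smul_one x (unit_norm_facts x)) with hTf_def
  set L : A → A := fun x => g W * x - g (W * x) with hL_def
  have hLlin : ∀ (c : ℂ) (x y : A), L (c • x + y) = c • L x + L y := by
    intro c x y
    simp only [hL_def, mul_add, mul_smul_comm, map_add, map_smul, smul_sub]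
    abel
  have hL1 : L 1 = 0 := by simp [hL_def]
  have hWT : ∀ x, W * Tf x = L x := by
    intro x
    have hu := isUnit_sub_smul_one x (unit_norm_facts x)
    have hspec : (hu.unit : A) = x - ((‖x‖+1:ℝ):ℂ) • 1 := hu.unit_spec
    have : Tf x = ↑hu.unit * g ((↑hu.unit⁻¹ : Aˣ) : A) * ↑hu.unit := rfl
    rw [this, hF hu.unit, hspec]
    have : L (x - ((‖x‖+1:ℝ):ℂ) • 1) = L x := by
      have h1 : x - ((‖x‖+1:ℝ):ℂ) • 1 = (-((‖x‖+1:ℝ):ℂ)) • (1:A) + x := by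
        rw [neg_smul]; abel
      rw [h1, hLlin, hL1, smul_zero, zero_add]
    rw [← this]
  -- T is linear
  have hTlin : ∀ (c : ℂ) (x y : A), Tf (c • x + y) = c • Tf x + Tf y := by
    intro c x y
    have h := hWl (Tf (c • x + y) - (c • Tf x + Tf y)) (by
      rw [mul_sub, mul_add, mul_smul_comm, hWT, hWT, hWT, hLlin, sub_self])
    exact sub_eq_zero.mp h
  set T : A →ₗ[ℂ] A :=
    { toFun := Tf
      map_add' := by
        intro x y
        have := hTlin 1 x y
        simpa using this
      map_smul' := by
        intro c x
        have h0 : Tf 0 = 0 := by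
          apply hWl
          rw [hWT]
          simp [hL_def]
        have := hTlin c x 0
        simp only [add_zero, h0] at this
        simpa using this } with hT_def
  have hT1 : T 1 = 0 := by
    apply hWl
    have : T (1:A) = Tf 1 := rfl
    rw [this, hWT]
    simp [hL_def]
  have hgTu : ∀ u : Aˣ, T ↑u = ↑u * g ((↑u⁻¹ : Aˣ) : A) * ↑u := by
    intro u
    have h := hWl (T ↑u - ↑u * g ((↑u⁻¹ : Aˣ) : A) * ↑u) (by
      rw [mul_sub, hF u]
      have : T (↑u : A) = Tf ↑u := rfl
      rw [this, hWT, sub_self])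
    exact sub_eq_zero.mp h
  exact core_lemma hJtoD g T hT1 hgTu

lemma single_point_right
    (hJtoD : ∀ δ : A →ₗ[ℂ] A,
      (∀ a b : A, δ (a * b + b * a) = δ a * b + a * δ b + δ b * a + b * δ a) →
      (∀ a b : A, δ (a * b) = δ a * b + a * δ b))
    (W : A) (hWr : ∀ a : A, a * W = 0 → a = 0)
    (g : A →ₗ[ℂ] A) (hg : ∀ a b : A, a * b = W → g (a * b) = g a * b + a * g b) :
    ∀ a b : A, g (a * b) = g a * b + a * g b := by
  have hgW : ∀ a b : A, a * b = W → g W = g a * b + a * g b := by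
    intro a b h
    have := hg a b h
    rwa [h] at this
  have hF : ∀ u : Aˣ, (↑u * g ((↑u⁻¹ : Aˣ) : A) * ↑u) * W = ↑u * g W - g (↑u * W) := by
    intro u
    have h0 : (↑u⁻¹ : A) * (↑u * W) = W := by
      rw [← mul_assoc, Units.inv_mul, one_mul]
    have h1 := hgW (↑u⁻¹ : A) (↑u * W) h0
    have h2 := congrArg (fun z => (↑u : A) * z) h1
    simp only [mul_add, Units.mul_inv_cancel_left] at h2
    rw [eq_sub_iff_add_eq, h2]
    simp only [mul_assoc]
  set Tf : A → A := fun x =>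
    (fun hu : IsUnit (x - ((‖x‖+1:ℝ):ℂ) • (1:A)) => ↑hu.unit * g ((↑hu.unit⁻¹ : Aˣ) : A) * ↑hu.unit)
      (isUnit_sub_smul_one x (unit_norm_facts x)) with hTf_def
  set L : A → A := fun x => x * g W - g (x * W) with hL_def
  have hLlin : ∀ (c : ℂ) (x y : A), L (c • x + y) = c • L x + L y := by
    intro c x y
    simp only [hL_def, add_mul, smul_mul_assoc, map_add, map_smul, smul_sub]
    abel
  have hL1 : L 1 = 0 := by simp [hL_def]
  have hWT : ∀ x, Tf x * W = L x := by
    intro x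
    have hu := isUnit_sub_smul_one x (unit_norm_facts x)
    have hspec : (hu.unit : A) = x - ((‖x‖+1:ℝ):ℂ) • 1 := hu.unit_spec
    have hTfx : Tf x = ↑hu.unit * g ((↑hu.unit⁻¹ : Aˣ) : A) * ↑hu.unit := rfl
    rw [hTfx, hF hu.unit, hspec]
    have hLx : L (x - ((‖x‖+1:ℝ):ℂ) • 1) = L x := by
      have h1 : x - ((‖x‖+1:ℝ):ℂ) • 1 = (-((‖x‖+1:ℝ):ℂ)) • (1:A) + x := by
        rw [neg_smul]; abel
      rw [h1, hLlin, hL1, smul_zero, zero_add]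
    rw [← hLx]
  have hTlin : ∀ (c : ℂ) (x y : A), Tf (c • x + y) = c • Tf x + Tf y := by
    intro c x y
    have h := hWr (Tf (c • x + y) - (c • Tf x + Tf y)) (by
      rw [sub_mul, add_mul, smul_mul_assoc, hWT, hWT, hWT, hLlin, sub_self])
    exact sub_eq_zero.mp h
  set T : A →ₗ[ℂ] A :=
    { toFun := Tf
      map_add' := by
        intro x y
        have := hTlin 1 x y
        simpa using this
      map_smul' := by
        intro c x
        have h0 : Tf 0 = 0 := by
          apply hWr
          rw [hWT]
          simp [hL_def]
        have := hTlin c x 0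
        simp only [add_zero, h0] at this
        simpa using this } with hT_def
  have hT1 : T 1 = 0 := by
    apply hWr
    have : T (1:A) = Tf 1 := rfl
    rw [this, hWT]
    simp [hL_def]
  have hgTu : ∀ u : Aˣ, T ↑u = ↑u * g ((↑u⁻¹ : Aˣ) : A) * ↑u := by
    intro u
    have h := hWr (T ↑u - ↑u * g ((↑u⁻¹ : Aˣ) : A) * ↑u) (by
      rw [sub_mul, hF u]
      have : T (↑u : A) = Tf ↑u := rfl
      rw [this, hWT, sub_self])
    exact sub_eq_zero.mp h
  exact core_lemma hJtoD g T hT1 hgTu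

end Wrap

/-- let `𝒜` be a unital complex Banach algebra on which every Jordan
derivation is a derivation, and let `W` be a left or right separating point of `𝒜`.
Then every sequence `{dᵢ}` of linear maps on `𝒜` with `d₀ = id` that is higher derivable
at `W` is a higher derivation. -/
theorem statement17 {A : Type*} [NormedRing A] [NormedAlgebra ℂ A] [CompleteSpace A]
    -- every Jordan derivation on `𝒜` is a derivation
    (hJtoD : ∀ δ : A →ₗ[ℂ] A,
      (∀ a b : A, δ (a * b + b * a) = δ a * b + a * δ b + δ b * a + b * δ a) →
      (∀ a b : A, δ (a * b) = δ a * b + a * δ b))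
    -- `W` is a left or right separating point of `𝒜`
    (W : A)
    (hW : (∀ a : A, W * a = 0 → a = 0) ∨ (∀ a : A, a * W = 0 → a = 0))
    -- `{dᵢ}` is higher derivable at `W`
    (d : ℕ → (A →ₗ[ℂ] A)) (hd0 : d 0 = LinearMap.id)
    (hd : ∀ n : ℕ, ∀ a b : A, a * b = W →
      d n (a * b) = ∑ i ∈ Finset.range (n + 1), d i a * d (n - i) b) :
    -- `{dᵢ}` is a higher derivation
    ∀ n : ℕ, ∀ a b : A, d n (a * b) = ∑ i ∈ Finset.range (n + 1), d i a * d (n - i) b := by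
  suffices main : ∀ n : ℕ, (∀ a b : A, d n (a*b) = ∑ i ∈ Finset.range (n+1), d i a * d (n-i) b) ∧
      (∀ a b : A, (deltaAux d n) (a*b) = (deltaAux d n) a * b + a * (deltaAux d n) b) by
    intro n a b; exact (main n).1 a b
  intro n
  induction n using Nat.strong_induction_on with
  | _ n ih =>
  obtain _ | m := n
  · constructor
    · intro a b; simp [hd0]
    · intro a b; simp [deltaAux]
  · have ihlaw : ∀ k, k ≤ m → ∀ a b : A,
        d k (a*b) = ∑ i ∈ Finset.range (k+1), d i a * d (k-i) b :=
      fun k hk => (ih k (by omega)).1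
    have ihder : ∀ j, j ≤ m → ∀ a b : A,
        (deltaAux d j) (a*b) = (deltaAux d j) a * b + a * (deltaAux d j) b :=
      fun j hj => (ih j (by omega)).2
    have hmne : ((m:ℂ)+1) ≠ 0 := by exact_mod_cast Nat.cast_add_one_ne_zero (R := ℂ) m
    set E : A →ₗ[ℂ] A :=
      ∑ j ∈ Finset.Icc 1 m, ((j:ℕ):ℂ) • ((deltaAux d j).comp (d (m+1-j))) with hE_def
    have hEapp : ∀ x : A,
        E x = ∑ j ∈ Finset.Icc 1 m, ((j:ℕ):ℂ) • (deltaAux d j) (d (m+1-j) x) := by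
      intro x
      rw [hE_def]
      simp [LinearMap.sum_apply]
    have hElaw : ∀ a b : A, E (a*b)
        = ((m:ℂ)+1) • (∑ p ∈ Finset.Icc 1 m, d p a * d (m+1-p) b) + E a * b + a * E b := by
      intro a b
      rw [hEapp, hEapp, hEapp]
      exact Elaw_aux d hd0 m ihlaw ihder a b
    set g : A →ₗ[ℂ] A := d (m+1) - ((m:ℂ)+1)⁻¹ • E with hg_def
    have hdelta_g : deltaAux d (m+1) = g := by
      rw [deltaAux_succ, ← hE_def, hg_def]
    have hgapp : ∀ x : A, g x = d (m+1) x - ((m:ℂ)+1)⁻¹ • E x := by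
      intro x
      rw [hg_def]
      simp [LinearMap.sub_apply, LinearMap.smul_apply]
    have hsplit : ∀ a b : A, ∑ i ∈ Finset.range (m+2), d i a * d (m+1-i) b
        = a * d (m+1) b + (∑ p ∈ Finset.Icc 1 m, d p a * d (m+1-p) b) + d (m+1) a * b := by
      intro a b
      rw [sum_range_split m (fun i => d i a * d (m+1-i) b)]
      simp [hd0]
    have hEab : ∀ a b : A, ((m:ℂ)+1)⁻¹ • E (a*b)
        = (∑ p ∈ Finset.Icc 1 m, d p a * d (m+1-p) b)
          + (((m:ℂ)+1)⁻¹ • E a) * b + a * (((m:ℂ)+1)⁻¹ • E b) := by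
      intro a b
      rw [hElaw, smul_add, smul_add, inv_smul_smul₀ hmne, ← smul_mul_assoc, ← mul_smul_comm]
    have hgder_at_W : ∀ a b : A, a * b = W → g (a*b) = g a * b + a * g b := by
      intro a b hab
      have h1 := hd (m+1) a b hab
      rw [show m+1+1 = m+2 by omega] at h1
      rw [hsplit a b] at h1
      rw [hgapp (a*b), h1, hEab a b, hgapp a, hgapp b]
      simp only [sub_mul, mul_sub]
      abel
    have hgder : ∀ a b : A, g (a*b) = g a * b + a * g b := by
      rcases hW with hWl | hWr
      · exact single_point_left hJtoD W hWl g hgder_at_W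
      · exact single_point_right hJtoD W hWr g hgder_at_W
    constructor
    · intro a b
      rw [show m+1+1 = m+2 by omega, hsplit a b]
      have h2 : d (m+1) (a*b) = g (a*b) + ((m:ℂ)+1)⁻¹ • E (a*b) := by
        rw [hgapp]; abel
      rw [h2, hgder, hEab a b, hgapp a, hgapp b]
      simp only [sub_mul, mul_sub]
      abel
    · intro a b
      rw [hdelta_g]
      exact hgder a b
end

section
/- Let 𝒜 be a norm-closed subalgebra of B(X) such that the closed linear span of {x ∈ X : x⊗f ∈ 𝒜 for some nonzero f ∈ X*} equals X and the intersection of {ker(f) : f ∈ X* with x⊗f ∈ 𝒜 for some nonzero x ∈ X} equals (0). Then every derivation δ : 𝒜 → B(X) is bounded (continuous). -/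
set_option synthInstance.maxHeartbeats 1000000
set_option maxHeartbeats 1000000

open Filter Topology
set_option maxHeartbeats 4000000

/-- let `𝒜` be a norm-closed subalgebra of `B(X)` such that the closed linear
span of `{x : x ⊗ f ∈ 𝒜 for some nonzero f ∈ X*}` is `X` and the intersection of
`{ker f : x ⊗ f ∈ 𝒜 for some nonzero x ∈ X}` is `(0)`. Then every derivation
`δ : 𝒜 → B(X)` is bounded (continuous). Here `x ⊗ f` is the rank-one operator
`y ↦ f(y) • x`, implemented as `f.smulRight x`. -/
theorem statement18 {X : Type*} [NormedAddCommGroup X] [NormedSpace ℂ X] [CompleteSpace X]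
    (𝒜 : Subalgebra ℂ (X →L[ℂ] X)) (hclosed : IsClosed (𝒜 : Set (X →L[ℂ] X)))
    -- `∨ {x : x ⊗ f ∈ 𝒜} = X`
    (hspan : (Submodule.span ℂ
      {x : X | ∃ f : X →L[ℂ] ℂ, f ≠ 0 ∧ f.smulRight x ∈ 𝒜}).topologicalClosure = ⊤)
    -- `∧ {ker f : x ⊗ f ∈ 𝒜} = (0)`
    (hker : (⨅ f ∈ {f : X →L[ℂ] ℂ | ∃ x : X, x ≠ 0 ∧ f.smulRight x ∈ 𝒜},
      LinearMap.ker (f : X →ₗ[ℂ] ℂ)) = ⊥)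
    -- `δ` is a derivation from `𝒜` into `B(X)`
    (δ : 𝒜 →ₗ[ℂ] (X →L[ℂ] X))
    (hδ : ∀ a b : 𝒜, δ (a * b) = δ a * (b : X →L[ℂ] X) + (a : X →L[ℂ] X) * δ b) :
    Continuous δ := by
  haveI : CompleteSpace 𝒜 := hclosed.completeSpace_coe
  -- key separating-space claim
  have key : ∀ (T : X →L[ℂ] X) (u : ℕ → 𝒜), Tendsto u atTop (𝓝 0) →
      Tendsto (fun n => δ (u n)) atTop (𝓝 T) → T = 0 := by
    intro T u hu hδu
    have hucoe : Tendsto (fun n => ((u n : X →L[ℂ] X))) atTop (𝓝 0) := by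
      have : Continuous ((↑) : 𝒜 → (X →L[ℂ] X)) := continuous_subtype_val
      simpa [Function.comp_def] using (this.tendsto (0 : 𝒜)).comp hu
    have h1 : ∀ x ∈ {x : X | ∃ f : X →L[ℂ] ℂ, f ≠ 0 ∧ f.smulRight x ∈ 𝒜},
        ∀ g ∈ {f : X →L[ℂ] ℂ | ∃ x : X, x ≠ 0 ∧ f.smulRight x ∈ 𝒜}, g (T x) = 0 := by
      rintro x ⟨f, hf, hfa⟩ g ⟨v, hv, hgv⟩
      set a : 𝒜 := ⟨f.smulRight x, hfa⟩ with ha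
      set b : 𝒜 := ⟨g.smulRight v, hgv⟩ with hb
      set lam : ℕ → ℂ := fun n => g ((u n : X →L[ℂ] X) x) with hlam
      have hlam0 : Tendsto lam atTop (𝓝 0) := by
        have h1 : Tendsto (fun n => (u n : X →L[ℂ] X) x) atTop (𝓝 0) := by
          have : Continuous fun S : X →L[ℂ] X => S x := by
            exact (ContinuousLinearMap.apply ℂ X x).continuous
          simpa [Function.comp_def] using (this.tendsto 0).comp hucoe
        have : Tendsto (fun n => g ((u n : X →L[ℂ] X) x)) atTop (𝓝 (g 0)) :=
          (g.continuous.tendsto 0).comp h1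
        simpa using this
      -- step A
      have stepA : ∀ n, ((b * u n * a : 𝒜) : X →L[ℂ] X) = lam n • (f.smulRight v) := by
        intro n
        ext y
        simp only [Subalgebra.coe_mul, ContinuousLinearMap.mul_apply,
          ContinuousLinearMap.smulRight_apply, ContinuousLinearMap.coe_smul',
          Pi.smul_apply, hlam, ha, hb]
        rw [map_smul, map_smul]
        rw [smul_smul, mul_comm, smul_eq_mul]
      -- step B
      have stepB : ∃ C : X →L[ℂ] X, ∀ n, δ (b * u n * a) = lam n • C := by
        by_cases hall : ∀ n, lam n = 0
        · refine ⟨0, fun n => ?_⟩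
          have : (b * u n * a : 𝒜) = 0 := by
            apply Subtype.ext
            rw [stepA n, hall n, zero_smul]; rfl
          rw [this, map_zero, smul_zero]
        · push_neg at hall
          obtain ⟨m, hm⟩ := hall
          have hc : f.smulRight v ∈ 𝒜 := by
            have h2 : f.smulRight v = (lam m)⁻¹ • ((b * u m * a : 𝒜) : X →L[ℂ] X) := by
              rw [stepA m, smul_smul, inv_mul_cancel₀ hm, one_smul]
            rw [h2]
            exact 𝒜.smul_mem (SetLike.coe_mem _) _
          refine ⟨δ ⟨f.smulRight v, hc⟩, fun n => ?_⟩
          have : (b * u n * a : 𝒜) = lam n • (⟨f.smulRight v, hc⟩ : 𝒜) := by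
            apply Subtype.ext
            rw [stepA n]; rfl
          rw [this, map_smul]
      obtain ⟨C, hC⟩ := stepB
      -- limit of δ (b * u n * a) is 0
      have lim0 : Tendsto (fun n => δ (b * u n * a)) atTop (𝓝 0) := by
        simp only [hC]
        simpa using hlam0.smul (tendsto_const_nhds (x := C))
      -- limit via Leibniz is b * T * a
      have limL : Tendsto (fun n => δ (b * u n * a)) atTop
          (𝓝 ((b : X →L[ℂ] X) * (T * (a : X →L[ℂ] X)))) := by
        have heq : ∀ n, δ (b * u n * a) =
            δ b * ((u n : X →L[ℂ] X) * (a : X →L[ℂ] X)) +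
            (b : X →L[ℂ] X) * (δ (u n) * (a : X →L[ℂ] X) + (u n : X →L[ℂ] X) * δ a) := by
          intro n
          rw [mul_assoc, hδ b (u n * a), hδ (u n) a]
          norm_cast
        simp only [heq]
        have t1 : Tendsto (fun n => δ b * ((u n : X →L[ℂ] X) * (a : X →L[ℂ] X)))
            atTop (𝓝 0) := by
          have := (hucoe.mul ((tendsto_const_nhds : Tendsto (fun _ : ℕ => (a : X →L[ℂ] X)) atTop _))).const_mul (δ b)
          simpa using this
        have t2 : Tendsto (fun n => (b : X →L[ℂ] X) *
            (δ (u n) * (a : X →L[ℂ] X) + (u n : X →L[ℂ] X) * δ a)) atTop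
            (𝓝 ((b : X →L[ℂ] X) * (T * (a : X →L[ℂ] X)))) := by
          have i1 : Tendsto (fun n => δ (u n) * (a : X →L[ℂ] X) + (u n : X →L[ℂ] X) * δ a)
              atTop (𝓝 (T * (a : X →L[ℂ] X))) := by
            have := (hδu.mul ((tendsto_const_nhds : Tendsto (fun _ : ℕ => (a : X →L[ℂ] X)) atTop _))).add
              (hucoe.mul ((tendsto_const_nhds : Tendsto (fun _ : ℕ => δ a) atTop _)))
            simpa using this
          exact i1.const_mul _
        have := t1.add t2
        simpa using this
      have hbta : (b : X →L[ℂ] X) * (T * (a : X →L[ℂ] X)) = 0 :=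
        (tendsto_nhds_unique limL lim0)
      -- evaluate
      obtain ⟨y, hy⟩ : ∃ y, f y ≠ 0 := by
        by_contra h
        push_neg at h
        exact hf (ContinuousLinearMap.ext fun y => by simpa using h y)
      have := congrFun (congrArg DFunLike.coe hbta) y
      simp only [ContinuousLinearMap.mul_apply, ha, hb, ContinuousLinearMap.smulRight_apply,
        ContinuousLinearMap.zero_apply] at this
      rw [map_smul, map_smul] at this
      rcases smul_eq_zero.mp this with h | h
      · rcases smul_eq_zero.mp h with h' | h'
        · exact absurd h' hy
        · exact h'
      · exact absurd h hv
    -- T vanishes on the span set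
    have h2 : ∀ x ∈ {x : X | ∃ f : X →L[ℂ] ℂ, f ≠ 0 ∧ f.smulRight x ∈ 𝒜}, T x = 0 := by
      intro x hx
      have : T x ∈ (⨅ f ∈ {f : X →L[ℂ] ℂ | ∃ x : X, x ≠ 0 ∧ f.smulRight x ∈ 𝒜},
          LinearMap.ker (f : X →ₗ[ℂ] ℂ)) := by
        simp only [Submodule.mem_iInf, LinearMap.mem_ker]
        intro g hg
        exact h1 x hx g hg
      rw [hker] at this
      simpa using this
    -- conclude T = 0
    have h3 : (Submodule.span ℂ
        {x : X | ∃ f : X →L[ℂ] ℂ, f ≠ 0 ∧ f.smulRight x ∈ 𝒜}).topologicalClosure ≤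
        LinearMap.ker (T : X →ₗ[ℂ] X) := by
      apply Submodule.topologicalClosure_minimal
      · rw [Submodule.span_le]
        intro x hx
        exact h2 x hx
      · exact ContinuousLinearMap.isClosed_ker T
    rw [hspan] at h3
    ext y
    have hy := h3 (Submodule.mem_top (x := y))
    rw [LinearMap.mem_ker] at hy
    rw [ContinuousLinearMap.coe_coe] at hy
    rw [hy]
    rfl
  apply δ.continuous_of_seq_closed_graph
  intro u A T hu hT
  have h0 : Tendsto (fun n => u n - A) atTop (𝓝 0) := by
    have h := hu.sub (tendsto_const_nhds (x := A))
    rwa [sub_self] at h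
  have h1 : Tendsto (fun n => δ (u n - A)) atTop (𝓝 (T - δ A)) := by
    have heq : (fun n => δ (u n - A)) = fun n => δ (u n) - δ A :=
      funext fun n => map_sub δ (u n) A
    rw [heq]
    exact hT.sub tendsto_const_nhds
  have := key (T - δ A) _ h0 h1
  exact sub_eq_zero.mp this
end

section
/- Let 𝒜 be a norm-closed subalgebra of B(X) such that the closed linear span of {x ∈ X : x⊗f ∈ 𝒜 for some nonzero f ∈ X*} equals X and the intersection of {ker(f) : f ∈ X* with x⊗f ∈ 𝒜 for some nonzero x ∈ X} equals (0). Then every Jordan higher derivation {d_i}_{i∈ℕ} on 𝒜 is bounded, i.e. each d_n is continuous. -/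
set_option synthInstance.maxHeartbeats 1000000
set_option maxHeartbeats 1000000

open Filter Topology


/-- finite-dimensional restriction trick -/
private lemma aux_fd {E F : Type*} [NormedAddCommGroup E] [NormedSpace ℂ E]
    [NormedAddCommGroup F] [NormedSpace ℂ F] (L : E →ₗ[ℂ] F) (V : Submodule ℂ E)
    [FiniteDimensional ℂ V] (w : ℕ → E) (hmem : ∀ k, w k ∈ V)
    (hw : Tendsto w atTop (𝓝 0)) : Tendsto (fun k => L (w k)) atTop (𝓝 0) := by
  have h1 : Tendsto (fun k => (⟨w k, hmem k⟩ : V)) atTop (𝓝 0) := by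
    rw [(Topology.IsInducing.subtypeVal : Topology.IsInducing ((↑) : V → E)).tendsto_nhds_iff]
    simpa [Function.comp_def] using hw
  have h2 : Continuous (L.comp V.subtype) := LinearMap.continuous_of_finiteDimensional _
  have h3 := (h2.tendsto 0).comp h1
  simpa [Function.comp_def] using h3

/-- scalar extraction from the rank-one identity -/
private lemma aux_scalar {X : Type*} [NormedAddCommGroup X] [NormedSpace ℂ X]
    (f g : X →L[ℂ] ℂ) (z y : X) (T : X →L[ℂ] X)
    (hf : f ≠ 0) (hy : y ≠ 0) (hz : z ≠ 0)
    (hco : g (T z) • f.smulRight y + f (T y) • g.smulRight z = 0) : g (T z) = 0 := by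
  set α : ℂ := g (T z) with hαdef
  set β : ℂ := f (T y) with hβdef
  by_contra hα
  have hu0 : f.smulRight y ≠ 0 := by
    intro h
    apply hf
    ext w'
    have h2 := congrArg (fun T : X →L[ℂ] X => T w') h
    simp only [ContinuousLinearMap.smulRight_apply, ContinuousLinearMap.zero_apply] at h2
    rcases smul_eq_zero.mp h2 with h' | h'
    · simpa using h'
    · exact absurd h' hy
  set c : ℂ := -β / α with hcdef
  have hc : f.smulRight y = c • g.smulRight z := by
    have h1 : α • f.smulRight y = (-β) • g.smulRight z := by
      rw [neg_smul]
      exact eq_neg_of_add_eq_zero_left hco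
    calc f.smulRight y = α⁻¹ • (α • f.smulRight y) := by
          rw [smul_smul, inv_mul_cancel₀ hα, one_smul]
      _ = α⁻¹ • ((-β) • g.smulRight z) := by rw [h1]
      _ = c • g.smulRight z := by rw [smul_smul, hcdef]; congr 1; field_simp
  obtain ⟨z₁, hz₁⟩ : ∃ z₁, f z₁ ≠ 0 := by
    by_contra h
    push_neg at h
    exact hf (by ext w'; simpa using h w')
  have happ : ∀ w' : X, f w' • y = (c * g w') • z := by
    intro w'
    have h2 := congrArg (fun T : X →L[ℂ] X => T w') hc
    simpa [smul_smul] using h2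
  have hyx : y = ((c * g z₁) / (f z₁)) • z := by
    have h1 := happ z₁
    calc y = (f z₁)⁻¹ • (f z₁ • y) := by rw [smul_smul, inv_mul_cancel₀ hz₁, one_smul]
      _ = (f z₁)⁻¹ • ((c * g z₁) • z) := by rw [h1]
      _ = ((c * g z₁) / (f z₁)) • z := by rw [smul_smul]; congr 1; field_simp
  set γ : ℂ := (c * g z₁) / (f z₁) with hγdef
  have hγ : γ ≠ 0 := by
    intro h
    apply hy
    rw [hyx, h, zero_smul]
  have hfg : ∀ w' : X, f w' * γ = c * g w' := by
    intro w'
    have h1 := happ w'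
    rw [hyx, smul_smul] at h1
    exact smul_left_injective ℂ hz h1
  have hβcα : β = c * α := by
    have h1 := hfg (T y)
    have h2 : g (T y) = γ * α := by
      rw [hyx]
      simp [hαdef, smul_eq_mul]
    rw [h2, ← hβdef] at h1
    have h3 : β * γ = (c * α) * γ := by rw [h1]; ring
    exact mul_right_cancel₀ hγ h3
  have hββ : β = -β := by
    calc β = c * α := hβcα
      _ = -β := by rw [hcdef, div_mul_cancel₀ _ hα]
  have hβ0 : β = 0 := by linear_combination hββ / 2
  have hc0 : c = 0 := by rw [hcdef, hβ0]; simp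
  rw [hc0, zero_smul] at hc
  exact hu0 hc


private lemma aux_step {A : Type*} [Ring A] [Module ℂ A] [TopologicalSpace A]
    [IsTopologicalRing A]
    (d : ℕ → (A →ₗ[ℂ] A)) (hd0 : d 0 = LinearMap.id)
    (n : ℕ) (hn : 0 < n)
    (hdn : ∀ a b : A, d n (a * b + b * a) =
      ∑ i ∈ Finset.range (n + 1), (d i a * d (n - i) b + d i b * d (n - i) a))
    (IH : ∀ m, m < n → Continuous (d m))
    (As : ℕ → A) (B : A) (hA : Tendsto As atTop (𝓝 0))
    (hB : Tendsto (fun k => d n (As k)) atTop (𝓝 B)) (C : A) :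
    Tendsto (fun k => As k * C + C * As k) atTop (𝓝 0) ∧
    Tendsto (fun k => d n (As k * C + C * As k)) atTop (𝓝 (B * C + C * B)) := by
  constructor
  · have h := (hA.mul (tendsto_const_nhds : Tendsto (fun _ : ℕ => C) atTop (𝓝 C))).add
      ((tendsto_const_nhds : Tendsto (fun _ : ℕ => C) atTop (𝓝 C)).mul hA)
    simpa using h
  · have hterm : ∀ i ∈ Finset.range (n + 1),
        Tendsto (fun k => d i (As k) * d (n - i) C + d i C * d (n - i) (As k)) atTop
          (𝓝 (if i = 0 then C * B else if i = n then B * C else 0)) := by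
      intro i hi
      rcases eq_or_ne i 0 with rfl | hi0
      · have h := ((hA.mul (tendsto_const_nhds : Tendsto (fun _ : ℕ => d n C) atTop _)).add
          ((tendsto_const_nhds : Tendsto (fun _ : ℕ => C) atTop (𝓝 C)).mul hB))
        simp only [hd0, LinearMap.id_coe, id_eq, Nat.sub_zero, if_pos rfl]
        simpa using h
      · rcases eq_or_ne i n with rfl | hin
        · have hdAi : Tendsto (fun k => d 0 (As k)) atTop (𝓝 0) := by
            simp only [hd0, LinearMap.id_coe, id_eq]; exact hA
          have h := (hB.mul (tendsto_const_nhds : Tendsto (fun _ : ℕ => C) atTop (𝓝 C))).add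
            ((tendsto_const_nhds : Tendsto (fun _ : ℕ => d i C) atTop _).mul hdAi)
          simp only [Nat.sub_self, hd0, LinearMap.id_coe, id_eq, if_neg hi0, if_pos rfl]
          simpa [hd0] using h
        · have hiln : i < n := lt_of_le_of_ne (Nat.lt_succ_iff.mp (Finset.mem_range.mp hi)) hin
          have hniln : n - i < n := Nat.sub_lt hn (Nat.pos_of_ne_zero hi0)
          have h1 : Tendsto (fun k => d i (As k)) atTop (𝓝 0) := by
            have h := ((IH i hiln).tendsto 0).comp hA
            simpa [Function.comp_def] using h
          have h2 : Tendsto (fun k => d (n - i) (As k)) atTop (𝓝 0) := by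
            have h := ((IH (n - i) hniln).tendsto 0).comp hA
            simpa [Function.comp_def] using h
          have h := (h1.mul (tendsto_const_nhds : Tendsto (fun _ : ℕ => d (n - i) C) atTop _)).add
            ((tendsto_const_nhds : Tendsto (fun _ : ℕ => d i C) atTop _).mul h2)
          simp only [if_neg hi0, if_neg hin]
          simpa using h
    have hsum := tendsto_finset_sum (Finset.range (n + 1)) hterm
    have hLsum : (∑ i ∈ Finset.range (n + 1),
        (if i = 0 then C * B else if i = n then B * C else (0 : A))) = B * C + C * B := by
      have hsplit : ∀ i ∈ Finset.range (n + 1),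
          (if i = 0 then C * B else if i = n then B * C else (0 : A)) =
            (if i = 0 then C * B else 0) + (if i = n then B * C else 0) := by
        intro i _
        rcases eq_or_ne i 0 with rfl | h0
        · simp [(Ne.symm hn.ne' : (0:ℕ) ≠ n)]
        · rcases eq_or_ne i n with rfl | hn'
          · simp [h0]
          · simp [h0, hn']
      rw [Finset.sum_congr rfl hsplit, Finset.sum_add_distrib]
      rw [Finset.sum_ite_eq' (Finset.range (n + 1)) 0 (fun _ => C * B),
        Finset.sum_ite_eq' (Finset.range (n + 1)) n (fun _ => B * C)]
      simp [Finset.mem_range, Nat.lt_succ_iff, add_comm]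
    rw [hLsum] at hsum
    exact Tendsto.congr (fun k => (hdn (As k) C).symm) hsum


private lemma aux_fd' {E F : Type*} [AddCommGroup E] [Module ℂ E] [TopologicalSpace E]
    [IsTopologicalAddGroup E] [ContinuousSMul ℂ E] [T2Space E]
    [AddCommGroup F] [Module ℂ F] [TopologicalSpace F]
    [IsTopologicalAddGroup F] [ContinuousSMul ℂ F] (L : E →ₗ[ℂ] F) (V : Submodule ℂ E)
    [FiniteDimensional ℂ V] (w : ℕ → E) (hmem : ∀ k, w k ∈ V)
    (hw : Tendsto w atTop (𝓝 0)) : Tendsto (fun k => L (w k)) atTop (𝓝 0) := by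
  have h1 : Tendsto (fun k => (⟨w k, hmem k⟩ : V)) atTop (𝓝 0) := by
    rw [(Topology.IsInducing.subtypeVal : Topology.IsInducing ((↑) : V → E)).tendsto_nhds_iff]
    simpa [Function.comp_def] using hw
  have h2 : Continuous (L.comp V.subtype) := LinearMap.continuous_of_finiteDimensional _
  have h3 := (h2.tendsto 0).comp h1
  simpa [Function.comp_def] using h3

private lemma aux_core {A : Type*} [Ring A] [Module ℂ A] [TopologicalSpace A]
    [IsTopologicalRing A] [ContinuousSMul ℂ A] [T2Space A]
    (d : ℕ → (A →ₗ[ℂ] A))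
    (n : ℕ)
    (As : ℕ → A) (B : A) (hA : Tendsto As atTop (𝓝 0))
    (hB : Tendsto (fun k => d n (As k)) atTop (𝓝 B)) (R S : A)
    (step : ∀ (As' : ℕ → A) (B' : A), Tendsto As' atTop (𝓝 0) →
      Tendsto (fun k => d n (As' k)) atTop (𝓝 B') → ∀ C : A,
      Tendsto (fun k => As' k * C + C * As' k) atTop (𝓝 0) ∧
      Tendsto (fun k => d n (As' k * C + C * As' k)) atTop (𝓝 (B' * C + C * B')))
    (V : Submodule ℂ A) [FiniteDimensional ℂ V]
    (hmem : ∀ k, S * As k * R + R * As k * S ∈ V) :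
    S * B * R + R * B * S = 0 := by
  set w : ℕ → A := fun k => S * As k * R + R * As k * S with hwdef
  have hw0 : Tendsto w atTop (𝓝 0) := by
    have h : Tendsto (fun k => S * As k * R + R * As k * S) atTop
        (𝓝 (S * 0 * R + R * 0 * S)) :=
      ((tendsto_const_nhds.mul hA).mul tendsto_const_nhds).add
        ((tendsto_const_nhds.mul hA).mul tendsto_const_nhds)
    simpa using h
  have hdw0 : Tendsto (fun k => d n (w k)) atTop (𝓝 0) := aux_fd' (d n) V w hmem hw0
  obtain ⟨hA1, hdA1⟩ := step As B hA hB R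
  obtain ⟨hA2, hdA2⟩ := step As B hA hB S
  obtain ⟨-, hdA1S⟩ := step (fun k => As k * R + R * As k) (B * R + R * B) hA1 hdA1 S
  obtain ⟨-, hdA2R⟩ := step (fun k => As k * S + S * As k) (B * S + S * B) hA2 hdA2 R
  obtain ⟨-, hdAC⟩ := step As B hA hB (S * R + R * S)
  have hcomb : Tendsto (fun k => d n (w k) + d n (w k)) atTop
      (𝓝 ((S * B * R + R * B * S) + (S * B * R + R * B * S))) := by
    have heq : ∀ k, d n (w k) + d n (w k) =
        d n ((As k * R + R * As k) * S + S * (As k * R + R * As k)) +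
        d n ((As k * S + S * As k) * R + R * (As k * S + S * As k)) -
        d n (As k * (S * R + R * S) + (S * R + R * S) * As k) := by
      intro k
      rw [← map_add, ← map_add, ← map_sub]
      congr 1
      simp only [hwdef]
      noncomm_ring
    have hval : ((B * R + R * B) * S + S * (B * R + R * B)) +
        ((B * S + S * B) * R + R * (B * S + S * B)) -
        (B * (S * R + R * S) + (S * R + R * S) * B) =
        (S * B * R + R * B * S) + (S * B * R + R * B * S) := by noncomm_ring
    have hlim := (hdA1S.add hdA2R).sub hdAC
    rw [hval] at hlim
    exact Tendsto.congr (fun k => (heq k).symm) hlim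
  have hzero : (S * B * R + R * B * S) + (S * B * R + R * B * S) = 0 := by
    have h0 : Tendsto (fun k => d n (w k) + d n (w k)) atTop (𝓝 (0 : A)) := by
      simpa using hdw0.add hdw0
    exact tendsto_nhds_unique hcomb h0
  have h2 : (2 : ℂ) • (S * B * R + R * B * S) = 0 := by
    rw [two_smul]; exact hzero
  calc S * B * R + R * B * S = (2 : ℂ)⁻¹ • ((2 : ℂ) • (S * B * R + R * B * S)) := by
        rw [smul_smul]; norm_num
    _ = 0 := by rw [h2, smul_zero]

set_option maxHeartbeats 10000000 in
/-- let `𝒜` be a norm-closed subalgebra of `B(X)` such that the closed linear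
span of `{x : x ⊗ f ∈ 𝒜 for some nonzero f ∈ X*}` is `X` and the intersection of
`{ker f : x ⊗ f ∈ 𝒜 for some nonzero x ∈ X}` is `(0)`. Then every Jordan higher derivation
`{dᵢ}` on `𝒜` is bounded, i.e. each `dₙ` is continuous. Here `x ⊗ f` is the rank-one
operator `y ↦ f(y) • x`, implemented as `f.smulRight x`. -/
theorem statement19 {X : Type*} [NormedAddCommGroup X] [NormedSpace ℂ X] [CompleteSpace X]
    (𝒜 : Subalgebra ℂ (X →L[ℂ] X)) (hclosed : IsClosed (𝒜 : Set (X →L[ℂ] X)))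
    -- `∨ {x : x ⊗ f ∈ 𝒜} = X`
    (hspan : (Submodule.span ℂ
      {x : X | ∃ f : X →L[ℂ] ℂ, f ≠ 0 ∧ f.smulRight x ∈ 𝒜}).topologicalClosure = ⊤)
    -- `∧ {ker f : x ⊗ f ∈ 𝒜} = (0)`
    (hker : (⨅ f ∈ {f : X →L[ℂ] ℂ | ∃ x : X, x ≠ 0 ∧ f.smulRight x ∈ 𝒜},
      LinearMap.ker (f : X →ₗ[ℂ] ℂ)) = ⊥)
    -- `{dᵢ}` is a Jordan higher derivation on `𝒜`
    (d : ℕ → (𝒜 →ₗ[ℂ] 𝒜)) (hd0 : d 0 = LinearMap.id)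
    (hd : ∀ n : ℕ, ∀ a b : 𝒜, d n (a * b + b * a) =
      ∑ i ∈ Finset.range (n + 1), (d i a * d (n - i) b + d i b * d (n - i) a)) :
    -- each `dₙ` is continuous
    ∀ n : ℕ, Continuous (d n) := by
  classical
  haveI : CompleteSpace ↥𝒜 := hclosed.completeSpace_coe
  intro n
  induction n using Nat.strong_induction_on with
  | _ n IH =>
  rcases Nat.eq_zero_or_pos n with rfl | hn
  · rw [hd0, LinearMap.id_coe]; exact continuous_id
  have hstep := aux_step (A := ↥𝒜) d hd0 n hn (hd n) IH
  apply LinearMap.continuous_of_seq_closed_graph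
  intro u a b hu hub
  have hA : Tendsto (fun k => u k - a) atTop (𝓝 0) := by
    simpa using hu.sub (tendsto_const_nhds : Tendsto (fun _ : ℕ => a) atTop (𝓝 a))
  have hBt : Tendsto (fun k => d n (u k - a)) atTop (𝓝 (b - d n a)) := by
    have h := hub.sub (tendsto_const_nhds : Tendsto (fun _ : ℕ => d n a) atTop (𝓝 (d n a)))
    simpa [Function.comp, map_sub] using h
  set As : ℕ → ↥𝒜 := fun k => u k - a with hAsdef
  set B : ↥𝒜 := b - d n a with hBdef
  suffices hB0 : B = 0 by
    have h : b - d n a = 0 := hB0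
    exact sub_eq_zero.mp h
  -- show the coercion of B kills every generating vector
  have hBz : ∀ z ∈ {x : X | ∃ f : X →L[ℂ] ℂ, f ≠ 0 ∧ f.smulRight x ∈ 𝒜},
      (B : X →L[ℂ] X) z = 0 := by
    rintro z ⟨f, hf, hfz⟩
    by_cases hz : z = 0
    · simp [hz]
    have hmem : (B : X →L[ℂ] X) z ∈ (⨅ g ∈ {g : X →L[ℂ] ℂ | ∃ x : X, x ≠ 0 ∧ g.smulRight x ∈ 𝒜},
        LinearMap.ker (g : X →ₗ[ℂ] ℂ)) := by
      simp only [Submodule.mem_iInf, LinearMap.mem_ker]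
      intro g hgmem
      rcases hgmem with ⟨y, hy, hgy⟩
      by_cases hg : g = 0
      · simp [hg]
      set R : ↥𝒜 := ⟨f.smulRight z, hfz⟩ with hRdef
      set S : ↥𝒜 := ⟨g.smulRight y, hgy⟩ with hSdef
      have hSAR : ∀ T : ↥𝒜, ((S * T * R : ↥𝒜) : X →L[ℂ] X)
          = g ((T : X →L[ℂ] X) z) • f.smulRight y := by
        intro T
        ext w
        simp [hRdef, hSdef, ContinuousLinearMap.mul_apply, map_smul, smul_smul, mul_comm]
      have hRAS : ∀ T : ↥𝒜, ((R * T * S : ↥𝒜) : X →L[ℂ] X)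
          = f ((T : X →L[ℂ] X) y) • g.smulRight z := by
        intro T
        ext w
        simp [hRdef, hSdef, ContinuousLinearMap.mul_apply, map_smul, smul_smul, mul_comm]
      set V : Submodule ℂ (X →L[ℂ] X) := Submodule.span ℂ {f.smulRight y, g.smulRight z}
        with hVdef
      set W : Submodule ℂ ↥𝒜 := Submodule.comap (𝒜.val.toLinearMap) V with hWdef
      haveI hVfd : FiniteDimensional ℂ V := FiniteDimensional.span_of_finite ℂ (Set.toFinite _)
      haveI hWfd : FiniteDimensional ℂ W := by
        refine FiniteDimensional.of_injective
          (LinearMap.codRestrict V ((𝒜.val.toLinearMap).comp W.subtype) (fun x => x.2)) ?_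
        intro p q hpq
        have h1 := congrArg (fun v : V => (v : X →L[ℂ] X)) hpq
        exact Subtype.ext (Subtype.ext h1)
      have hwmem : ∀ k, S * As k * R + R * As k * S ∈ W := by
        intro k
        rw [hWdef, Submodule.mem_comap]
        have hval : (𝒜.val.toLinearMap) (S * As k * R + R * As k * S)
            = ((S * As k * R : ↥𝒜) : X →L[ℂ] X) + ((R * As k * S : ↥𝒜) : X →L[ℂ] X) := rfl
        rw [hval, hSAR (As k), hRAS (As k)]
        exact add_mem
          (Submodule.smul_mem _ _ (Submodule.subset_span (Set.mem_insert _ _)))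
          (Submodule.smul_mem _ _ (Submodule.subset_span
            (Set.mem_insert_of_mem _ (Set.mem_singleton _))))
      have hSBR : S * B * R + R * B * S = 0 :=
        aux_core d n As B hA hBt R S hstep W hwmem
      have hco : g ((B : X →L[ℂ] X) z) • f.smulRight y
          + f ((B : X →L[ℂ] X) y) • g.smulRight z = 0 := by
        have h := congrArg (Subtype.val) hSBR
        have h2 : ((S * B * R + R * B * S : ↥𝒜) : X →L[ℂ] X)
            = ((S * B * R : ↥𝒜) : X →L[ℂ] X) + ((R * B * S : ↥𝒜) : X →L[ℂ] X) := rfl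
        rw [h2, hSAR B, hRAS B] at h
        simpa using h
      exact aux_scalar f g z y (B : X →L[ℂ] X) hf hy hz hco
    rw [hker] at hmem
    simpa using hmem
  -- conclude `B = 0`
  have hle : Submodule.span ℂ {x : X | ∃ f : X →L[ℂ] ℂ, f ≠ 0 ∧ f.smulRight x ∈ 𝒜} ≤
      LinearMap.ker ((B : X →L[ℂ] X) : X →ₗ[ℂ] X) := by
    rw [Submodule.span_le]
    intro z hzmem
    exact LinearMap.mem_ker.mpr (hBz z hzmem)
  have hkerc : IsClosed ((LinearMap.ker ((B : X →L[ℂ] X) : X →ₗ[ℂ] X) : Submodule ℂ X) : Set X) :=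
    ContinuousLinearMap.isClosed_ker _
  have hcl := Submodule.topologicalClosure_minimal _ hle hkerc
  rw [hspan] at hcl
  have hBcoe : (B : X →L[ℂ] X) = 0 := by
    ext z
    exact LinearMap.mem_ker.mp (hcl Submodule.mem_top)
  exact Subtype.ext (by simpa using hBcoe)
end
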